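/- arXiv:0904.0715 — 2 statements merged into one kernel-verified Lean document; each statement's English description precedes it below -/
import Mathlib

section
/- Consider the Ising model, i.e. I_x = I for all x ∈ ℤ with a fixed real I, and let β > 0 and τ = e^{−β I}. Then for every n ∈ ℕ one has Z_n^+ = (1/2)·( (1+τ)^{2(n+1)} + (1−τ)^{2(n+1)} ) and Z_n^± = (1/2)·( (1+τ)^{2(n+1)} − (1−τ)^{2(n+1)} ). -/
open Finset

/-- Spin configurations on the box `[-n, n] ⊆ ℤ`, encoded as boolean functions
(`true` ↔ spin `+1`, `false` ↔ spin `-1`). -/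
abbrev Config (n : ℕ) := {x // x ∈ Finset.Icc (-(n : ℤ)) (n : ℤ)} → Bool

/-- The spin value `±1` of the configuration `σ` at the site `x` (value `1` off the box). -/
noncomputable def spin {n : ℕ} (σ : Config n) (x : ℤ) : ℝ :=
  if h : x ∈ Finset.Icc (-(n : ℤ)) (n : ℤ) then (if σ ⟨x, h⟩ then 1 else -1) else 1

/-- The Hamiltonian `H_n^+` with plus boundary condition on both sides. -/
noncomputable def Hplus (I : ℤ → ℝ) (n : ℕ) (σ : Config n) : ℝ :=
  (∑ x ∈ Finset.Icc (-(n : ℤ) + 1) (n : ℤ),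
      I x * (if spin σ (x - 1) ≠ spin σ x then 1 else 0))
    + I (-(n : ℤ)) * (if spin σ (-(n : ℤ)) ≠ 1 then 1 else 0)
    + I ((n : ℤ) + 1) * (if spin σ (n : ℤ) ≠ 1 then 1 else 0)

/-- The Hamiltonian `H_n^±` (minus boundary on the left, plus on the right). -/
noncomputable def Hpm (I : ℤ → ℝ) (n : ℕ) (σ : Config n) : ℝ :=
  Hplus I n σ + I (-(n : ℤ)) * spin σ (-(n : ℤ))

/-- The partition function `Z_n^+`. -/
noncomputable def Zplus (β : ℝ) (I : ℤ → ℝ) (n : ℕ) : ℝ :=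
  ∑ σ : Config n, Real.exp (-β * Hplus I n σ)

/-- The partition function `Z_n^±`. -/
noncomputable def Zpm (β : ℝ) (I : ℤ → ℝ) (n : ℕ) : ℝ :=
  ∑ σ : Config n, Real.exp (-β * Hpm I n σ)

/- The free spins of the box together with the two boundary spins form a chain of `2n + 3`
spins, and both Hamiltonians count, with weight `I`, the domain walls of that chain: for `H_n^±`
the term `I_{-n} σ(-n)` exactly turns the `+` boundary spin at `-n - 1` into a `-`. Hence
`Z = ∑ τ ^ (number of domain walls)`, and summing over the spins one at a time (a transfer
matrix with eigenvalues `1 ± τ`) gives `((1 + τ)^(m+1) ± (1 - τ)^(m+1)) / 2` for a chain with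
`m + 1` bonds, the sign recording whether the two end spins agree. -/

section DomainWalls

variable {α : Type*} [DecidableEq α]

def domainWalls {m : ℕ} (s : Fin (m + 1) → α) : ℕ :=
  ∑ i : Fin m, if s i.castSucc ≠ s i.succ then 1 else 0

lemma domainWalls_cons {m : ℕ} (a : α) (s : Fin (m + 1) → α) :
    domainWalls (Fin.cons a s : Fin (m + 2) → α) =
      (if a ≠ s 0 then 1 else 0) + domainWalls s := by
  simp only [domainWalls, Fin.sum_univ_succ, Fin.castSucc_zero, Fin.cons_zero, Fin.cons_succ,
    ← Fin.succ_castSucc]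

lemma domainWalls_snoc {m : ℕ} (s : Fin (m + 1) → α) (b : α) :
    domainWalls (Fin.snoc s b : Fin (m + 2) → α) =
      domainWalls s + if s (Fin.last m) ≠ b then 1 else 0 := by
  simp only [domainWalls, Fin.sum_univ_castSucc, Fin.snoc_castSucc, Fin.succ_castSucc,
    Fin.succ_last, Fin.snoc_last]

lemma domainWalls_cons_snoc {m : ℕ} (a b : α) (s : Fin (m + 1) → α) :
    domainWalls (Fin.cons a (Fin.snoc s b) : Fin (m + 3) → α) =
      (if a ≠ s 0 then 1 else 0) + domainWalls s + if s (Fin.last m) ≠ b then 1 else 0 := by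
  have h0 : (Fin.snoc s b : Fin (m + 2) → α) 0 = s 0 :=
    Fin.snoc_castSucc (α := fun _ => α) (i := 0) ..
  rw [domainWalls_cons, domainWalls_snoc, h0, add_assoc]

end DomainWalls

noncomputable def chainSum (τ : ℝ) (m : ℕ) (a b : Bool) : ℝ :=
  ∑ s : Fin m → Bool, τ ^ domainWalls (Fin.cons a (Fin.snoc s b) : Fin (m + 2) → Bool)

lemma chainSum_zero (τ : ℝ) (a b : Bool) : chainSum τ 0 a b = if a = b then 1 else τ := by
  simp [chainSum, domainWalls, Fin.snoc, ite_not]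

lemma chainSum_succ (τ : ℝ) (m : ℕ) (a b : Bool) :
    chainSum τ (m + 1) a b =
      ∑ c : Bool, τ ^ (if a ≠ c then 1 else 0) * chainSum τ m c b := by
  rw [chainSum, ← (Fin.consEquiv fun _ => Bool).sum_comp, Fintype.sum_prod_type]
  simp only [Fin.consEquiv, Equiv.coe_fn_mk, ← Fin.cons_snoc_eq_snoc_cons, domainWalls_cons,
    Fin.cons_zero, pow_add, ← Finset.mul_sum, chainSum]

lemma chainSum_eq (τ : ℝ) (m : ℕ) (a b : Bool) :
    chainSum τ m a b =
      ((1 + τ) ^ (m + 1) + (if a = b then 1 else -1) * (1 - τ) ^ (m + 1)) / 2 := by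
  induction m generalizing a with
  | zero => rw [chainSum_zero]; cases a <;> cases b <;> norm_num <;> ring
  | succ m ih => rw [chainSum_succ]; cases a <;> cases b <;> simp [ih] <;> ring

lemma Int.sum_Icc_eq_sum_fin {M : Type*} [AddCommMonoid M] {a b : ℤ} {k : ℕ}
    (hk : b + 1 - a = k) (f : ℤ → M) : ∑ x ∈ Icc a b, f x = ∑ i : Fin k, f (a + i) := by
  rw [Int.Icc_eq_finset_map, sum_map, hk, Int.toNat_natCast, ← Fin.sum_univ_eq_sum_range]
  rfl

def boxEquiv (n : ℕ) : Fin (2 * n + 1) ≃ {x // x ∈ Icc (-(n : ℤ)) n} where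
  toFun i := ⟨-n + i, by simp only [mem_Icc]; omega⟩
  invFun x := ⟨(x.1 + n).toNat, by have := mem_Icc.1 x.2; omega⟩
  left_inv i := by ext; simp
  right_inv x := by ext; have := mem_Icc.1 x.2; simp; omega

def Bool.toSpin (b : Bool) : ℝ := if b then 1 else -1

lemma Bool.toSpin_injective : Function.Injective Bool.toSpin :=
  Bool.injective_iff.2 (by norm_num [Bool.toSpin])

lemma spin_boxEquiv {n : ℕ} (σ : Config n) (i : Fin (2 * n + 1)) :
    spin σ (-n + i) = (σ (boxEquiv n i)).toSpin :=
  dif_pos (boxEquiv n i).2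

lemma spin_neg_natCast {n : ℕ} (σ : Config n) : spin σ (-n) = (σ (boxEquiv n 0)).toSpin := by
  simpa using spin_boxEquiv σ 0

lemma spin_natCast {n : ℕ} (σ : Config n) :
    spin σ n = (σ (boxEquiv n (Fin.last _))).toSpin := by
  rw [← spin_boxEquiv]; congr 1; push_cast; ring

lemma Hplus_const_eq_mul_domainWalls {n : ℕ} (I : ℝ) (σ : Config n) :
    Hplus (fun _ => I) n σ =
      I * domainWalls (Fin.cons true (Fin.snoc (σ ∘ boxEquiv n) true)) := by
  have hbond (i : Fin (2 * n)) :
      (if spin σ (-n + 1 + i - 1) ≠ spin σ (-n + 1 + i) then (1 : ℝ) else 0) =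
        if σ (boxEquiv n i.castSucc) ≠ σ (boxEquiv n i.succ) then 1 else 0 := by
    have hprev : -n + 1 + (i : ℤ) - 1 = -n + (i.castSucc : ℕ) := by simp; ring
    have hnext : -n + 1 + (i : ℤ) = -n + (i.succ : ℕ) := by simp; ring
    refine if_congr ?_ rfl rfl
    rw [← Bool.toSpin_injective.ne_iff, ← spin_boxEquiv, ← spin_boxEquiv, hprev, hnext]
  rw [Hplus, Int.sum_Icc_eq_sum_fin (k := 2 * n) (by push_cast; ring), domainWalls_cons_snoc]
  have hne_one (b : Bool) : b.toSpin ≠ 1 ↔ b ≠ true := Bool.toSpin_injective.ne_iff' rfl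
  simp only [hbond, spin_neg_natCast, spin_natCast, hne_one, domainWalls, Function.comp_apply,
    ne_comm (a := true)]
  push_cast
  rw [← Finset.mul_sum]
  ring

lemma Hpm_const_eq_mul_domainWalls {n : ℕ} (I : ℝ) (σ : Config n) :
    Hpm (fun _ => I) n σ =
      I * domainWalls (Fin.cons false (Fin.snoc (σ ∘ boxEquiv n) true)) := by
  rw [Hpm, Hplus_const_eq_mul_domainWalls, domainWalls_cons_snoc, domainWalls_cons_snoc,
    spin_neg_natCast, Function.comp_apply]
  cases σ (boxEquiv n 0) <;> simp [Bool.toSpin] <;> ring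

theorem stmt_4_general (β I : ℝ) (n : ℕ) :
    Zplus β (fun _ => I) n = (1 / 2) *
        ((1 + Real.exp (-β * I)) ^ (2 * (n + 1)) + (1 - Real.exp (-β * I)) ^ (2 * (n + 1))) ∧
    Zpm β (fun _ => I) n = (1 / 2) *
        ((1 + Real.exp (-β * I)) ^ (2 * (n + 1)) - (1 - Real.exp (-β * I)) ^ (2 * (n + 1))) := by
  set τ := Real.exp (-β * I)
  have hexp (k : ℕ) : Real.exp (-β * (I * k)) = τ ^ k := by
    rw [← Real.exp_nat_mul]; ring_nf
  let e : Config n ≃ (Fin (2 * n + 1) → Bool) := (boxEquiv n).symm.arrowCongr (Equiv.refl Bool)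
  have hplus : Zplus β (fun _ => I) n = chainSum τ (2 * n + 1) true true :=
    Fintype.sum_equiv e _ _ fun σ => by rw [Hplus_const_eq_mul_domainWalls, hexp]; rfl
  have hpm : Zpm β (fun _ => I) n = chainSum τ (2 * n + 1) false true :=
    Fintype.sum_equiv e _ _ fun σ => by rw [Hpm_const_eq_mul_domainWalls, hexp]; rfl
  rw [hplus, hpm, chainSum_eq, chainSum_eq, show 2 * n + 1 + 1 = 2 * (n + 1) by ring]
  constructor <;> norm_num <;> ring

/-- For the Ising model (`I_x = I` for all `x`), with `τ = e^{-βI}`, the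
partition functions have the closed form
`Z_n^+ = ((1+τ)^{2(n+1)} + (1-τ)^{2(n+1)})/2` and
`Z_n^± = ((1+τ)^{2(n+1)} - (1-τ)^{2(n+1)})/2`. -/
theorem stmt_4 (β I : ℝ) (hβ : 0 < β) (n : ℕ) :
    Zplus β (fun _ => I) n = (1 / 2) *
        ((1 + Real.exp (-β * I)) ^ (2 * (n + 1)) + (1 - Real.exp (-β * I)) ^ (2 * (n + 1))) ∧
    Zpm β (fun _ => I) n = (1 / 2) *
        ((1 + Real.exp (-β * I)) ^ (2 * (n + 1)) - (1 - Real.exp (-β * I)) ^ (2 * (n + 1))) :=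
  stmt_4_general β I n
end

section
/- Consider the Ising model, i.e. I_x = I for all x ∈ ℤ with a fixed real I, and let β > 0. Then Z_n^± > 0 for every n ∈ ℕ and the ratio Z_n^+ / Z_n^± converges to 1 as n → ∞; that is, the partition functions with plus boundary conditions and with mixed boundary conditions are asymptotically equal. -/
open Finset

/-!
A configuration is determined by its domain walls: with a boundary spin `a = ±1` placed to the left
of `-n`, the walls of `σ` are the sites `x ∈ [-n, n]` with `σ(x-1) ≠ σ(x)`, every subset of
`[-n, n]` arises exactly once, and `σ(n) = a (-1)^#walls`. For constant coupling both Hamiltonians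
equal `I (#walls + [σ(n) ≠ 1])`, with `a = 1` for `H⁺` and `a = -1` for `H^±` (the extra term
`I σ(-n)` flips the left boundary condition). Summing over subsets with `ε = exp(-βI)` gives
`2 Z = (1 + ε)^(2n+2) ± (1 - ε)^(2n+2)`, and since `|1 - ε| < 1 + ε` the ratio tends to `1`.
-/

open Filter Topology Real

lemma eq_mul_neg_one_pow_card_filter_ne {f : ℤ → ℝ} (hf : ∀ x, f x = 1 ∨ f x = -1) {a m : ℤ}
    (h : a - 1 ≤ m) : f m = f (a - 1) * (-1) ^ #{x ∈ Icc a m | f (x - 1) ≠ f x} := by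
  induction m, h using Int.leInduction with
  | base => simp
  | succ m hm ih =>
    rw [← insert_Icc_right_eq_Icc_add_one (by omega), filter_insert, add_sub_cancel_right]
    by_cases hw : f m = f (m + 1)
    · rw [if_neg (not_not.2 hw), ← hw, ih]
    · have hflip : f (m + 1) = -f m := by
        rcases hf m with h | h <;> rcases hf (m + 1) with h' | h' <;> grind
      rw [if_pos hw, card_insert_of_notMem (by simp), pow_succ, ← mul_assoc, ← ih, hflip,
        mul_neg_one]

lemma two_mul_sum_powerset_pow_card_mul_ite {ι : Type*} {a : ℝ} (s : Finset ι) (ε : ℝ)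
    (ha : a = 1 ∨ a = -1) :
    2 * ∑ t ∈ s.powerset, ε ^ #t * (if a * (-1) ^ #t ≠ 1 then ε else 1)
      = (1 + ε) ^ (#s + 1) + a * (1 - ε) ^ (#s + 1) := by
  have hterm : ∀ k : ℕ, 2 * (ε ^ k * if a * (-1) ^ k ≠ 1 then ε else 1)
      = (1 + ε) * ε ^ k + a * (1 - ε) * (-ε) ^ k := fun k => by
    rcases Nat.even_or_odd k with h | h <;> simp only [h.neg_pow, one_pow] <;>
      rcases ha with rfl | rfl <;> norm_num <;> ring
  rw [mul_sum]
  simp only [hterm]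
  rw [sum_add_distrib, ← mul_sum, ← mul_sum]
  have hbinom : ∀ x : ℝ, ∑ t ∈ s.powerset, x ^ #t = (x + 1) ^ #s := fun x => by
    simpa using sum_pow_mul_eq_add_pow x 1 s
  rw [hbinom, hbinom, pow_succ', pow_succ', neg_add_eq_sub, add_comm ε]
  ring

lemma tendsto_add_pow_div_sub_pow {a b : ℝ} (hab : |b| < a) :
    Tendsto (fun k : ℕ => (a ^ k + b ^ k) / (a ^ k - b ^ k)) atTop (𝓝 1) := by
  have ha : 0 < a := (abs_nonneg b).trans_lt hab
  have hr : Tendsto (fun k : ℕ => (b / a) ^ k) atTop (𝓝 0) :=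
    tendsto_pow_atTop_nhds_zero_of_abs_lt_one (by rwa [abs_div, abs_of_pos ha, div_lt_one ha])
  have hlim := (hr.const_add 1).div (hr.const_sub 1) (by norm_num)
  rw [add_zero, sub_zero, div_one] at hlim
  refine hlim.congr fun k => ?_
  have hak : a ^ k ≠ 0 := pow_ne_zero k ha.ne'
  rw [Pi.div_apply, div_pow, one_add_div hak, one_sub_div hak, div_div_div_cancel_right₀ hak]

namespace Ising

variable {n : ℕ}

lemma spin_eq_one_or_neg_one (σ : Config n) (x : ℤ) : spin σ x = 1 ∨ spin σ x = -1 := by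
  unfold spin
  split_ifs <;> simp

lemma eq_of_spin_eq {σ τ : Config n} (h : ∀ x ∈ Icc (-(n : ℤ)) n, spin σ x = spin τ x) :
    σ = τ := by
  funext ⟨x, hx⟩
  have := h x hx
  simp only [spin, dif_pos hx] at this
  revert this
  cases σ ⟨x, hx⟩ <;> cases τ ⟨x, hx⟩ <;> norm_num

lemma card_Icc_neg_self : #(Icc (-(n : ℤ)) n) = 2 * n + 1 := by
  simp only [Int.card_Icc]
  omega

noncomputable def spinWithLeft (a : ℝ) (σ : Config n) (x : ℤ) : ℝ :=
  if x < -n then a else spin σ x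

noncomputable def walls (a : ℝ) (σ : Config n) : Finset ℤ :=
  {x ∈ Icc (-(n : ℤ)) n | spinWithLeft a σ (x - 1) ≠ spinWithLeft a σ x}

variable {a : ℝ}

lemma spin_eq_mul_neg_one_pow (ha : a = 1 ∨ a = -1) (σ : Config n) {m : ℤ}
    (hm : m ∈ Icc (-(n : ℤ)) n) : spin σ m = a * (-1) ^ #{x ∈ walls a σ | x ≤ m} := by
  rw [mem_Icc] at hm
  have hf : ∀ x, spinWithLeft a σ x = 1 ∨ spinWithLeft a σ x = -1 := fun x => by
    unfold spinWithLeft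
    split_ifs
    exacts [ha, spin_eq_one_or_neg_one σ x]
  have key := eq_mul_neg_one_pow_card_filter_ne hf (a := -n) (m := m) (by omega)
  have hfilter : {x ∈ Icc (-(n : ℤ)) m | spinWithLeft a σ (x - 1) ≠ spinWithLeft a σ x}
      = {x ∈ walls a σ | x ≤ m} := by
    ext x
    simp only [walls, mem_filter, mem_Icc]
    constructor
    · rintro ⟨⟨h1, h2⟩, hw⟩
      exact ⟨⟨⟨h1, h2.trans hm.2⟩, hw⟩, h2⟩
    · rintro ⟨⟨⟨h1, -⟩, hw⟩, h2⟩
      exact ⟨⟨h1, h2⟩, hw⟩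
  rwa [spinWithLeft, if_neg (by omega), spinWithLeft, if_pos (by omega), hfilter] at key

lemma spin_eq_mul_neg_one_pow_card_walls (ha : a = 1 ∨ a = -1) (σ : Config n) :
    spin σ n = a * (-1) ^ #(walls a σ) := by
  rw [spin_eq_mul_neg_one_pow ha σ (by simp),
    filter_true_of_mem (s := walls a σ) fun x hx => (mem_Icc.1 (mem_filter.1 hx).1).2]

lemma walls_injective (ha : a = 1 ∨ a = -1) : Function.Injective (walls (n := n) a) :=
  fun σ τ h => eq_of_spin_eq fun _ hm => by
    rw [spin_eq_mul_neg_one_pow ha σ hm, spin_eq_mul_neg_one_pow ha τ hm, h]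

lemma sum_comp_walls {M : Type*} [AddCommMonoid M] (ha : a = 1 ∨ a = -1) (g : Finset ℤ → M) :
    ∑ σ : Config n, g (walls a σ) = ∑ t ∈ (Icc (-(n : ℤ)) n).powerset, g t := by
  have hmaps : ∀ σ ∈ (univ : Finset (Config n)), walls a σ ∈ (Icc (-(n : ℤ)) n).powerset :=
    fun σ _ => mem_powerset.2 (filter_subset _ _)
  refine sum_nbij (walls a) hmaps (walls_injective ha).injOn ?_ fun _ _ => rfl
  -- surjectivity by counting: both sides have `2 ^ (2n+1)` elements
  refine surjOn_of_injOn_of_card_le _ hmaps (walls_injective ha).injOn ?_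
  simp

lemma sum_walls (I : ℤ → ℝ) (σ : Config n) :
    ∑ x ∈ walls a σ, I x = ∑ x ∈ Icc (-(n : ℤ) + 1) n,
        I x * (if spin σ (x - 1) ≠ spin σ x then 1 else 0)
      + I (-n) * (if spin σ (-n) ≠ a then 1 else 0) := by
  have hbulk : ∀ x ∈ Icc (-(n : ℤ) + 1) n,
      (if spinWithLeft a σ (x - 1) ≠ spinWithLeft a σ x then I x else 0)
        = I x * (if spin σ (x - 1) ≠ spin σ x then 1 else 0) := fun x hx => by
    rw [mem_Icc] at hx
    simp only [spinWithLeft, if_neg (show ¬x - 1 < -n by omega), if_neg (show ¬x < -n by omega),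
      mul_ite, mul_one, mul_zero]
  rw [walls, sum_filter, ← insert_Icc_add_one_left_eq_Icc (by omega), sum_insert (by simp),
    sum_congr rfl hbulk, add_comm]
  simp only [spinWithLeft, if_pos (show -(n : ℤ) - 1 < -n by omega), lt_irrefl, if_false,
    mul_ite, mul_one, mul_zero, ne_comm (a := a)]

lemma Hplus_eq_sum_walls (I : ℤ → ℝ) (σ : Config n) :
    Hplus I n σ = ∑ x ∈ walls 1 σ, I x + I (n + 1) * (if spin σ n ≠ 1 then 1 else 0) := by
  rw [sum_walls, Hplus]

lemma Hpm_eq_sum_walls (I : ℤ → ℝ) (σ : Config n) :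
    Hpm I n σ = ∑ x ∈ walls (-1) σ, I x + I (n + 1) * (if spin σ n ≠ 1 then 1 else 0) := by
  rw [sum_walls, Hpm, Hplus]
  rcases spin_eq_one_or_neg_one σ (-n) with h | h <;> rw [h] <;> norm_num <;> ring

lemma two_mul_sum_exp_walls (β I : ℝ) (ha : a = 1 ∨ a = -1) :
    2 * ∑ σ : Config n,
        exp (-β * (∑ _ ∈ walls a σ, I + I * (if spin σ n ≠ 1 then 1 else 0)))
      = (1 + exp (-β * I)) ^ (2 * n + 2) + a * (1 - exp (-β * I)) ^ (2 * n + 2) := by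
  have hterm : ∀ σ : Config n,
      exp (-β * (∑ _ ∈ walls a σ, I + I * (if spin σ n ≠ 1 then 1 else 0)))
        = exp (-β * I) ^ #(walls a σ)
          * (if a * (-1) ^ #(walls a σ) ≠ 1 then exp (-β * I) else 1) := fun σ => by
    rw [spin_eq_mul_neg_one_pow_card_walls ha, sum_const, nsmul_eq_mul, mul_add, exp_add,
      ← exp_nat_mul]
    split_ifs <;> simp [mul_left_comm]
  simp only [hterm]
  rw [sum_comp_walls ha fun t =>
      exp (-β * I) ^ #t * if a * (-1) ^ #t ≠ 1 then exp (-β * I) else 1,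
    two_mul_sum_powerset_pow_card_mul_ite _ _ ha, card_Icc_neg_self]

lemma two_mul_Zplus (β I : ℝ) (n : ℕ) :
    2 * Zplus β (fun _ => I) n
      = (1 + exp (-β * I)) ^ (2 * n + 2) + (1 - exp (-β * I)) ^ (2 * n + 2) := by
  simpa only [Zplus, Hplus_eq_sum_walls, one_mul] using two_mul_sum_exp_walls β I (Or.inl rfl)

lemma two_mul_Zpm (β I : ℝ) (n : ℕ) :
    2 * Zpm β (fun _ => I) n
      = (1 + exp (-β * I)) ^ (2 * n + 2) - (1 - exp (-β * I)) ^ (2 * n + 2) := by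
  simpa only [Zpm, Hpm_eq_sum_walls, neg_one_mul, ← sub_eq_add_neg] using
    two_mul_sum_exp_walls β I (Or.inr rfl)

end Ising

open Ising in
theorem stmt_5_general (β I : ℝ) :
    (∀ n : ℕ, 0 < Zpm β (fun _ => I) n) ∧
    Filter.Tendsto (fun n : ℕ => Zplus β (fun _ => I) n / Zpm β (fun _ => I) n)
      Filter.atTop (nhds 1) := by
  refine ⟨fun n => sum_pos (fun _ _ => exp_pos _) univ_nonempty, ?_⟩
  have hε := exp_pos (-β * I)
  have hgap : |1 - exp (-β * I)| < 1 + exp (-β * I) := abs_sub_lt_iff.2 ⟨by linarith, by linarith⟩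
  have hratio : ∀ n : ℕ, Zplus β (fun _ => I) n / Zpm β (fun _ => I) n
      = ((1 + exp (-β * I)) ^ (2 * n + 2) + (1 - exp (-β * I)) ^ (2 * n + 2))
        / ((1 + exp (-β * I)) ^ (2 * n + 2) - (1 - exp (-β * I)) ^ (2 * n + 2)) := fun n => by
    rw [← two_mul_Zplus, ← two_mul_Zpm, mul_div_mul_left _ _ two_ne_zero]
  simp only [hratio]
  exact (tendsto_add_pow_div_sub_pow hgap).comp
    (tendsto_atTop_mono (fun n => show n ≤ 2 * n + 2 by omega) tendsto_id)

/-- For the Ising model (`I_x = I` for all `x`), the partition function `Z_n^±`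
is positive and the ratio `Z_n^+/Z_n^±` tends to `1` as `n → ∞`: the two
partition functions are asymptotically equal. -/
theorem stmt_5 (β I : ℝ) (hβ : 0 < β) :
    (∀ n : ℕ, 0 < Zpm β (fun _ => I) n) ∧
    Filter.Tendsto (fun n : ℕ => Zplus β (fun _ => I) n / Zpm β (fun _ => I) n)
      Filter.atTop (nhds 1) :=
  stmt_5_general β I
end
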